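/- arXiv:2110.14048 — 6 statements merged into one kernel-verified Lean document; each statement's English description precedes it below -/
import Mathlib

section
/- Let g_0, g_1, ..., g_K ∈ R^m, c > 0, and let w* minimize the function F(w) = ⟨g_w, g_0⟩ + c‖g_0‖·‖g_w‖ over the probability simplex W, with g_{w*} ≠ 0. Then d* = g_0 + (c‖g_0‖/‖g_{w*}‖) g_{w*} is a solution of max_{d ∈ R^m} min_{i∈[K]} ⟨g_i, d⟩ subject to ‖d - g_0‖ ≤ c‖g_0‖, and the optimal value equals ⟨g_{w*}, g_0⟩ + c‖g_0‖·‖g_{w*}‖. -/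
/-!
Weak duality: for `w` in the simplex, `min_i ⟪g i, d⟫ ≤ ⟪g_w, d⟫ ≤ ⟪g_w, g₀⟫ + c‖g₀‖‖g_w‖` whenever
`‖d - g₀‖ ≤ c‖g₀‖`, by Cauchy–Schwarz.
Attainment: `d*` is the gradient of `F(v) = ⟪v, g₀⟫ + c‖g₀‖‖v‖` at `g_{w*} ≠ 0`, so minimality of
`g_{w*}` over the convex hull of the `g i` gives `⟪g i - g_{w*}, d*⟫ ≥ 0`, while
`⟪g_{w*}, d*⟫ = F(g_{w*})`. Differentiability of the norm is replaced by the bound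
`‖x‖ (‖x + y‖ - ‖x‖) ≤ ⟪x, y⟫ + ‖y‖² / 2`, which is `(‖x + y‖ - ‖x‖)² ≥ 0`.
-/

open scoped RealInnerProductSpace
open Set Filter Topology

lemma nonneg_of_forall_mul_add_sq_mul_nonneg {a C : ℝ}
    (h : ∀ t ∈ Ioc (0 : ℝ) 1, 0 ≤ t * a + t ^ 2 * C) : 0 ≤ a := by
  have hlim : Tendsto (fun t : ℝ => a + t * C) (𝓝[>] 0) (𝓝 a) := by
    have hcont : Continuous fun t : ℝ => a + t * C := by fun_prop
    simpa using (hcont.tendsto 0).mono_left nhdsWithin_le_nhds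
  refine ge_of_tendsto hlim ?_
  filter_upwards [Ioc_mem_nhdsGT zero_lt_one] with t ht
  have hat := h t ht
  have ht0 : 0 < t := ht.1
  nlinarith

section InnerProductSpace

variable {E : Type*} [NormedAddCommGroup E] [InnerProductSpace ℝ E]

lemma norm_mul_sub_norm_le_inner_add (x y : E) :
    ‖x‖ * (‖x + y‖ - ‖x‖) ≤ ⟪x, y⟫ + ‖y‖ ^ 2 / 2 := by
  nlinarith [sq_nonneg (‖x + y‖ - ‖x‖), norm_add_sq_real x y]

lemma inner_le_inner_add_mul_norm_of_norm_sub_le {x d g₀ : E} {r : ℝ} (hd : ‖d - g₀‖ ≤ r) :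
    ⟪x, d⟫ ≤ ⟪x, g₀⟫ + r * ‖x‖ := by
  have hcs : ⟪x, d - g₀⟫ ≤ ‖x‖ * ‖d - g₀‖ := real_inner_le_norm _ _
  have : ‖x‖ * ‖d - g₀‖ ≤ ‖x‖ * r := mul_le_mul_of_nonneg_left hd (norm_nonneg _)
  rw [inner_sub_right] at hcs
  linarith

lemma inner_add_div_norm_smul_self {x : E} (hx : x ≠ 0) (g₀ : E) (r : ℝ) :
    ⟪x, g₀ + (r / ‖x‖) • x⟫ = ⟪x, g₀⟫ + r * ‖x‖ := by
  have : ‖x‖ ≠ 0 := norm_ne_zero_iff.mpr hx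
  rw [inner_add_right, real_inner_smul_right, real_inner_self_eq_norm_sq]
  field_simp

lemma norm_div_norm_smul_self {x : E} (hx : x ≠ 0) {r : ℝ} (hr : 0 ≤ r) :
    ‖(r / ‖x‖) • x‖ = r := by
  rw [norm_smul, Real.norm_of_nonneg (by positivity), div_mul_cancel₀ r (norm_ne_zero_iff.mpr hx)]

lemma iInf_inner_le_inner_sum_smul {ι : Type*} [Fintype ι] {w : ι → ℝ}
    (hw : w ∈ stdSimplex ℝ ι) (g : ι → E) (d : E) :
    ⨅ i, ⟪g i, d⟫ ≤ ⟪∑ i, w i • g i, d⟫ := by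
  have hbdd : BddBelow (range fun i => ⟪g i, d⟫) := (finite_range _).bddBelow
  calc ⨅ i, ⟪g i, d⟫ = ∑ i, w i * ⨅ j, ⟪g j, d⟫ := by rw [← Finset.sum_mul, hw.2, one_mul]
    _ ≤ ∑ i, w i * ⟪g i, d⟫ :=
      Finset.sum_le_sum fun i _ => mul_le_mul_of_nonneg_left (ciInf_le hbdd i) (hw.1 i)
    _ = ⟪∑ i, w i • g i, d⟫ := by simp only [sum_inner, real_inner_smul_left]

lemma inner_le_inner_of_isMinOn_inner_add_mul_norm {S : Set E} (hS : Convex ℝ S)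
    {g₀ x y : E} {r : ℝ} (hr : 0 ≤ r) (hx0 : x ≠ 0) (hxS : x ∈ S) (hyS : y ∈ S)
    (hmin : IsMinOn (fun v => ⟪v, g₀⟫ + r * ‖v‖) S x) :
    ⟪x, g₀ + (r / ‖x‖) • x⟫ ≤ ⟪y, g₀ + (r / ‖x‖) • x⟫ := by
  set s := r / ‖x‖
  have hxpos : 0 < ‖x‖ := norm_pos_iff.mpr hx0
  have hs : 0 ≤ s := div_nonneg hr hxpos.le
  have hsx : s * ‖x‖ = r := div_mul_cancel₀ r hxpos.ne'
  suffices 0 ≤ ⟪y - x, g₀ + s • x⟫ by rw [inner_sub_left] at this; linarith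
  refine nonneg_of_forall_mul_add_sq_mul_nonneg (C := s * ‖y - x‖ ^ 2 / 2) fun t ht => ?_
  have hopt : ⟪x, g₀⟫ + r * ‖x‖ ≤ ⟪x + t • (y - x), g₀⟫ + r * ‖x + t • (y - x)‖ :=
    hmin (hS.add_smul_sub_mem hxS hyS (Ioc_subset_Icc_self ht))
  have hnorm := mul_le_mul_of_nonneg_left (norm_mul_sub_norm_le_inner_add x (t • (y - x))) hs
  rw [norm_smul, Real.norm_of_nonneg ht.1.le, real_inner_smul_right] at hnorm
  rw [inner_add_left, real_inner_smul_left, ← hsx] at hopt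
  rw [inner_add_right, real_inner_smul_right, real_inner_comm x]
  linear_combination hopt + hnorm

end InnerProductSpace

/-- Strong duality for the CAGrad subproblem. -/
theorem stmt_1 (m K : ℕ) (hK : 0 < K) (c : ℝ) (hc : 0 < c)
    (g₀ : EuclideanSpace ℝ (Fin m)) (g : Fin K → EuclideanSpace ℝ (Fin m))
    (w : Fin K → ℝ) (hw : w ∈ stdSimplex ℝ (Fin K))
    (hmin : ∀ v ∈ stdSimplex ℝ (Fin K),
      ⟪∑ i, w i • g i, g₀⟫ + c * ‖g₀‖ * ‖∑ i, w i • g i‖ ≤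
        ⟪∑ i, v i • g i, g₀⟫ + c * ‖g₀‖ * ‖∑ i, v i • g i‖)
    (hne : (∑ i, w i • g i) ≠ 0) :
    haveI : Nonempty (Fin K) := Fin.pos_iff_nonempty.mp hK
    let gw := ∑ i, w i • g i
    let d := g₀ + (c * ‖g₀‖ / ‖gw‖) • gw
    ‖d - g₀‖ ≤ c * ‖g₀‖ ∧
      (⨅ i : Fin K, ⟪g i, d⟫) = ⟪gw, g₀⟫ + c * ‖g₀‖ * ‖gw‖ ∧
      ∀ d' : EuclideanSpace ℝ (Fin m), ‖d' - g₀‖ ≤ c * ‖g₀‖ →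
        (⨅ i : Fin K, ⟪g i, d'⟫) ≤ ⟪gw, g₀⟫ + c * ‖g₀‖ * ‖gw‖ := by
  have : Nonempty (Fin K) := Fin.pos_iff_nonempty.mp hK
  intro gw d
  have hr : 0 ≤ c * ‖g₀‖ := by positivity
  set S := Fintype.linearCombination ℝ g '' stdSimplex ℝ (Fin K)
  have hS : Convex ℝ S := (convex_stdSimplex ℝ _).linear_image _
  have hgwS : gw ∈ S := ⟨w, hw, Fintype.linearCombination_apply _ _ _⟩
  have hgS (i : Fin K) : g i ∈ S :=
    ⟨Pi.single i 1, single_mem_stdSimplex ℝ i, by simp [Fintype.linearCombination_apply_single]⟩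
  have hgwmin : IsMinOn (fun v => ⟪v, g₀⟫ + c * ‖g₀‖ * ‖v‖) S gw := by
    rintro _ ⟨v, hv, rfl⟩
    rw [Fintype.linearCombination_apply]
    exact hmin v hv
  have hval : ⟪gw, d⟫ = ⟪gw, g₀⟫ + c * ‖g₀‖ * ‖gw‖ := inner_add_div_norm_smul_self hne g₀ _
  refine ⟨?_, le_antisymm ?_ (le_ciInf fun i => ?_), fun d' hd' => ?_⟩
  · rw [add_sub_cancel_left, norm_div_norm_smul_self hne hr]
  · exact (iInf_inner_le_inner_sum_smul hw g d).trans_eq hval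
  · exact hval ▸ inner_le_inner_of_isMinOn_inner_add_mul_norm hS hr hne hgwS (hgS i) hgwmin
  · exact (iInf_inner_le_inner_sum_smul hw g d').trans
      (inner_le_inner_add_mul_norm_of_norm_sub_le hd')
end

section
/- Let L : R^m → R be differentiable with H-Lipschitz gradient (H > 0), and let θ' = θ - α d for a step size 0 < α ≤ 1/H and d ∈ R^m satisfying ‖d - ∇L(θ)‖ ≤ c‖∇L(θ)‖ with 0 ≤ c < 1. Then L(θ') - L(θ) ≤ -(α/2)(1 - c²)‖∇L(θ)‖². -/
open scoped RealInnerProductSpace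

/-! Along `t ↦ θ + t • v` the gap between `L` and the quadratic model
`L θ + t ⟪∇L θ, v⟫ + (H/2) t² ‖v‖²` has derivative `⟪∇L(θ + t v) - ∇L θ, v⟫ - H t ‖v‖² ≤ 0`,
so it is antitone for `t ≥ 0`; this is the descent lemma. For `v = -α d` with `H α ≤ 1`, the
model is at most `L θ - α ⟪∇L θ, d⟫ + (α/2) ‖d‖² = L θ + (α/2) (‖d - ∇L θ‖² - ‖∇L θ‖²)`. -/

section DescentLemma

variable {E : Type*} [NormedAddCommGroup E] [InnerProductSpace ℝ E] [CompleteSpace E]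
  {f : E → ℝ} {g : E → E}

theorem hasDerivAt_comp_add_smul_of_hasGradientAt (hf : ∀ y, HasGradientAt f (g y) y)
    (x v : E) (t : ℝ) :
    HasDerivAt (fun s : ℝ => f (x + s • v)) ⟪g (x + t • v), v⟫ t := by
  have hline : HasDerivAt (fun s : ℝ => x + s • v) v t := by
    simpa using ((hasDerivAt_id t).smul_const v).const_add x
  simpa [InnerProductSpace.toDual_apply_apply, Function.comp_def] using
    (hf (x + t • v)).hasFDerivAt.comp_hasDerivAt t hline

theorem apply_add_le_of_lipschitz_gradient {H : ℝ} (hf : ∀ y, HasGradientAt f (g y) y)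
    (x : E) (hg : ∀ y, ‖g y - g x‖ ≤ H * ‖y - x‖) (v : E) :
    f (x + v) ≤ f x + ⟪g x, v⟫ + H / 2 * ‖v‖ ^ 2 := by
  set φ : ℝ → ℝ := fun t => f (x + t • v) - t * ⟪g x, v⟫ - H / 2 * t ^ 2 * ‖v‖ ^ 2
  have hφ' : ∀ t, HasDerivAt φ (⟪g (x + t • v) - g x, v⟫ - H * t * ‖v‖ ^ 2) t := by
    intro t
    have := (((hasDerivAt_comp_add_smul_of_hasGradientAt hf x v t).sub
      ((hasDerivAt_id t).mul_const ⟪g x, v⟫)).sub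
      (((hasDerivAt_pow 2 t).const_mul (H / 2)).mul_const (‖v‖ ^ 2)))
    refine this.congr_deriv ?_
    rw [inner_sub_left]
    simp only [Nat.cast_ofNat]
    ring
  have hφ'_nonpos : ∀ t ∈ interior (Set.Ici (0 : ℝ)),
      ⟪g (x + t • v) - g x, v⟫ - H * t * ‖v‖ ^ 2 ≤ 0 := by
    intro t ht
    rw [interior_Ici] at ht
    rw [sub_nonpos]
    calc ⟪g (x + t • v) - g x, v⟫ ≤ ‖g (x + t • v) - g x‖ * ‖v‖ := real_inner_le_norm _ _
      _ ≤ H * ‖t • v‖ * ‖v‖ := by gcongr; simpa using hg (x + t • v)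
      _ = H * t * ‖v‖ ^ 2 := by rw [norm_smul, Real.norm_of_nonneg ht.le]; ring
  have hanti : AntitoneOn φ (Set.Ici 0) :=
    antitoneOn_of_hasDerivWithinAt_nonpos (convex_Ici 0)
      (fun t _ => (hφ' t).continuousAt.continuousWithinAt)
      (fun t _ => (hφ' t).hasDerivWithinAt) hφ'_nonpos
  have := hanti (Set.mem_Ici.mpr le_rfl) (Set.mem_Ici.mpr zero_le_one) zero_le_one
  norm_num [φ] at this
  linarith

theorem apply_sub_smul_le_of_lipschitz_gradient {H α : ℝ} (hf : ∀ y, HasGradientAt f (g y) y)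
    (x : E) (hg : ∀ y, ‖g y - g x‖ ≤ H * ‖y - x‖) (hα : 0 ≤ α) (hαH : H * α ≤ 1) (d : E) :
    f (x - α • d) ≤ f x + α / 2 * (‖d - g x‖ ^ 2 - ‖g x‖ ^ 2) := by
  have hdescent := apply_add_le_of_lipschitz_gradient hf x hg (-(α • d))
  rw [← sub_eq_add_neg, inner_neg_right, inner_smul_right, norm_neg, norm_smul,
    Real.norm_of_nonneg hα] at hdescent
  have hpolar : ‖d - g x‖ ^ 2 = ‖d‖ ^ 2 - 2 * ⟪g x, d⟫ + ‖g x‖ ^ 2 := by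
    rw [norm_sub_sq_real, real_inner_comm]
  have hstep : H / 2 * (α * ‖d‖) ^ 2 ≤ α / 2 * ‖d‖ ^ 2 := by
    have : H / 2 * (α * ‖d‖) ^ 2 = (H * α) * (α / 2 * ‖d‖ ^ 2) := by ring
    rw [this]
    exact mul_le_of_le_one_left (by positivity) hαH
  rw [hpolar]
  linarith

end DescentLemma

theorem stmt_3_general (m : ℕ) (H α c : ℝ) (hα : 0 < α) (hαH : α ≤ 1 / H)
    (L : EuclideanSpace ℝ (Fin m) → ℝ) (g : EuclideanSpace ℝ (Fin m) → EuclideanSpace ℝ (Fin m))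
    (hgrad : ∀ x, HasGradientAt L (g x) x)
    (hLip : ∀ x y, ‖g x - g y‖ ≤ H * ‖x - y‖)
    (θ d : EuclideanSpace ℝ (Fin m)) (hd : ‖d - g θ‖ ≤ c * ‖g θ‖) :
    L (θ - α • d) - L θ ≤ -(α / 2) * (1 - c ^ 2) * ‖g θ‖ ^ 2 := by
  have hH : 0 < H := one_div_pos.mp (hα.trans_le hαH)
  have hαH' : H * α ≤ 1 := by rwa [le_div_iff₀ hH, mul_comm] at hαH
  have hstep := apply_sub_smul_le_of_lipschitz_gradient hgrad θ (fun y => hLip y θ) hα.le hαH' d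
  have herr : ‖d - g θ‖ ^ 2 ≤ c ^ 2 * ‖g θ‖ ^ 2 := by
    rw [← mul_pow]
    exact pow_le_pow_left₀ (norm_nonneg _) hd 2
  linarith [mul_le_mul_of_nonneg_left herr (half_pos hα).le]

/-- Per-step descent guarantee of CAGrad. -/
theorem stmt_3 (m : ℕ) (H α c : ℝ) (hH : 0 < H) (hα : 0 < α) (hαH : α ≤ 1 / H)
    (hc0 : 0 ≤ c) (hc1 : c < 1)
    (L : EuclideanSpace ℝ (Fin m) → ℝ) (g : EuclideanSpace ℝ (Fin m) → EuclideanSpace ℝ (Fin m))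
    (hgrad : ∀ x, HasGradientAt L (g x) x)
    (hLip : ∀ x y, ‖g x - g y‖ ≤ H * ‖x - y‖)
    (θ d : EuclideanSpace ℝ (Fin m)) (hd : ‖d - g θ‖ ≤ c * ‖g θ‖) :
    L (θ - α • d) - L θ ≤ -(α / 2) * (1 - c ^ 2) * ‖g θ‖ ^ 2 :=
  stmt_3_general m H α c hα hαH L g hgrad hLip θ d hd
end

section
/- Assume L_0 : R^m → R is differentiable with H-Lipschitz gradient, bounded below by L_0* > -∞. Let (θ_t) be generated by θ_{t+1} = θ_t - α d_t where 0 < α ≤ 1/H, 0 ≤ c < 1, and each d_t satisfies ‖d_t - ∇L_0(θ_t)‖ ≤ c‖∇L_0(θ_t)‖. Then for every T, Σ_{t=0}^T ‖∇L_0(θ_t)‖² ≤ 2(L_0(θ_0) - L_0*) / (α(1 - c²)). -/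
/-!
For `f` with `H`-Lipschitz gradient, the descent lemma
`f (x + v) ≤ f x + ⟪∇f x, v⟫ + H/2 ‖v‖²` applied to the step `v = -α d` with `α H ≤ 1` gives
`f (x - α d) ≤ f x + α/2 (‖d - ∇f x‖² - ‖∇f x‖²)`, so a direction within `c ‖∇f x‖` of the
gradient decreases `f` by at least `α (1 - c²)/2 ‖∇f x‖²`. Summing these decreases telescopes,
and the total is bounded by `f θ₀ - inf f`.
-/

open scoped RealInnerProductSpace

section Descent

variable {E : Type*} [NormedAddCommGroup E] [InnerProductSpace ℝ E] [CompleteSpace E]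
  {f : E → ℝ} {g : E → E} {H : ℝ}

theorem HasGradientAt.hasDerivAt_comp_add_smul {f' x v : E} {t : ℝ}
    (hf : HasGradientAt f f' (x + t • v)) :
    HasDerivAt (fun s : ℝ => f (x + s • v)) ⟪f', v⟫ t := by
  have hline : HasDerivAt (fun s : ℝ => x + s • v) v t := by
    simpa using ((hasDerivAt_id t).smul_const v).const_add x
  simpa [Function.comp_def] using hf.hasFDerivAt.comp_hasDerivAt t hline

theorem le_add_inner_add_of_lipschitz_gradient (hgrad : ∀ x, HasGradientAt f (g x) x)
    (hLip : ∀ x y, ‖g x - g y‖ ≤ H * ‖x - y‖) (x v : E) :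
    f (x + v) ≤ f x + ⟪g x, v⟫ + H / 2 * ‖v‖ ^ 2 := by
  set φ : ℝ → ℝ := fun t => f (x + t • v) - t * ⟪g x, v⟫ - H / 2 * t ^ 2 * ‖v‖ ^ 2
  have hφ : ∀ t, HasDerivAt φ (⟪g (x + t • v) - g x, v⟫ - H * t * ‖v‖ ^ 2) t := by
    intro t
    have hquad : HasDerivAt (fun s : ℝ => H / 2 * s ^ 2 * ‖v‖ ^ 2) (H * t * ‖v‖ ^ 2) t :=
      (((hasDerivAt_pow 2 t).const_mul (H / 2)).mul_const (‖v‖ ^ 2)).congr_deriv (by ring)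
    refine ((((hgrad _).hasDerivAt_comp_add_smul).sub
      ((hasDerivAt_id t).mul_const ⟪g x, v⟫)).sub hquad).congr_deriv ?_
    rw [inner_sub_left, one_mul]
  have hφ_nonpos : ∀ t ∈ interior (Set.Ici (0 : ℝ)),
      ⟪g (x + t • v) - g x, v⟫ - H * t * ‖v‖ ^ 2 ≤ 0 := by
    intro t ht
    rw [interior_Ici, Set.mem_Ioi] at ht
    rw [sub_nonpos]
    have hstep : ‖g (x + t • v) - g x‖ ≤ H * t * ‖v‖ := by
      simpa [norm_smul, abs_of_pos ht, mul_assoc] using hLip (x + t • v) x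
    calc ⟪g (x + t • v) - g x, v⟫ ≤ ‖g (x + t • v) - g x‖ * ‖v‖ := real_inner_le_norm _ _
      _ ≤ H * t * ‖v‖ * ‖v‖ := mul_le_mul_of_nonneg_right hstep (norm_nonneg v)
      _ = H * t * ‖v‖ ^ 2 := by ring
  have hanti : AntitoneOn φ (Set.Ici 0) :=
    antitoneOn_of_hasDerivWithinAt_nonpos (convex_Ici 0)
      (fun t _ => (hφ t).continuousAt.continuousWithinAt)
      (fun t _ => (hφ t).hasDerivWithinAt) hφ_nonpos
  have h10 : φ 1 ≤ φ 0 := hanti Set.self_mem_Ici (by norm_num) zero_le_one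
  simp only [φ, one_smul, zero_smul, add_zero, one_mul, one_pow, zero_mul, sub_zero,
    ne_eq, OfNat.ofNat_ne_zero, not_false_eq_true, zero_pow, mul_zero] at h10
  linarith

theorem le_sub_of_inexact_gradient_step (hgrad : ∀ x, HasGradientAt f (g x) x)
    (hLip : ∀ x y, ‖g x - g y‖ ≤ H * ‖x - y‖) {α c : ℝ} (hα : 0 ≤ α) (hαH : α * H ≤ 1)
    {x d : E} (hd : ‖d - g x‖ ≤ c * ‖g x‖) :
    f (x - α • d) ≤ f x - α * (1 - c ^ 2) / 2 * ‖g x‖ ^ 2 := by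
  have hdescent := le_add_inner_add_of_lipschitz_gradient hgrad hLip x (-(α • d))
  rw [← sub_eq_add_neg, inner_neg_right, real_inner_smul_right, norm_neg, norm_smul,
    Real.norm_of_nonneg hα] at hdescent
  have hstep : H / 2 * (α * ‖d‖) ^ 2 ≤ α / 2 * ‖d‖ ^ 2 := by
    have : α * H * (α * ‖d‖ ^ 2) ≤ 1 * (α * ‖d‖ ^ 2) := by gcongr
    linarith
  have hpolar : ‖d - g x‖ ^ 2 = ‖d‖ ^ 2 - 2 * ⟪g x, d⟫ + ‖g x‖ ^ 2 := by
    rw [norm_sub_sq_real, real_inner_comm]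
  have hsq : ‖d - g x‖ ^ 2 ≤ c ^ 2 * ‖g x‖ ^ 2 := by
    rw [← mul_pow]
    exact pow_le_pow_left₀ (norm_nonneg _) hd 2
  linear_combination hdescent + hstep + α / 2 * hsq - α / 2 * hpolar

end Descent

theorem sum_range_le_sub_of_le_sub_succ {u a : ℕ → ℝ} {lb : ℝ} (ha : ∀ t, a t ≤ u t - u (t + 1))
    (hlb : ∀ t, lb ≤ u t) (n : ℕ) : ∑ t ∈ Finset.range n, a t ≤ u 0 - lb :=
  calc ∑ t ∈ Finset.range n, a t ≤ ∑ t ∈ Finset.range n, (u t - u (t + 1)) :=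
        Finset.sum_le_sum fun t _ => ha t
    _ = u 0 - u n := Finset.sum_range_sub' u n
    _ ≤ u 0 - lb := by linarith [hlb n]

theorem stmt_4_general (m : ℕ) (H α c L₀star : ℝ) (hα : 0 < α) (hαH : α ≤ 1 / H)
    (hc0 : 0 ≤ c) (hc1 : c < 1)
    (L₀ : EuclideanSpace ℝ (Fin m) → ℝ)
    (g : EuclideanSpace ℝ (Fin m) → EuclideanSpace ℝ (Fin m))
    (hgrad : ∀ x, HasGradientAt L₀ (g x) x)
    (hLip : ∀ x y, ‖g x - g y‖ ≤ H * ‖x - y‖)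
    (hbdd : ∀ x, L₀star ≤ L₀ x)
    (θ d : ℕ → EuclideanSpace ℝ (Fin m))
    (hupd : ∀ t, θ (t + 1) = θ t - α • d t)
    (hd : ∀ t, ‖d t - g (θ t)‖ ≤ c * ‖g (θ t)‖) (T : ℕ) :
    ∑ t ∈ Finset.range (T + 1), ‖g (θ t)‖ ^ 2 ≤
      2 * (L₀ (θ 0) - L₀star) / (α * (1 - c ^ 2)) := by
  have hH : 0 < H := by
    by_contra! hH
    linarith [one_div_nonpos.2 hH]
  have hαH' : α * H ≤ 1 := (le_div_iff₀ hH).1 hαH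
  have hκ : 0 < α * (1 - c ^ 2) / 2 := by
    have : c ^ 2 < 1 := by nlinarith
    positivity
  have hstep : ∀ t, α * (1 - c ^ 2) / 2 * ‖g (θ t)‖ ^ 2 ≤ L₀ (θ t) - L₀ (θ (t + 1)) := by
    intro t
    rw [hupd t]
    linarith [le_sub_of_inexact_gradient_step hgrad hLip hα.le hαH' (hd t)]
  have hdecrease := sum_range_le_sub_of_le_sub_succ hstep (fun t => hbdd (θ t)) (T + 1)
  rw [← Finset.mul_sum] at hdecrease
  rw [le_div_iff₀ (by linarith)]
  linarith

/-- Convergence of CAGrad (Theorem 1(2)): telescoping bound on gradient norms. -/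
theorem stmt_4 (m : ℕ) (H α c L₀star : ℝ) (hH : 0 < H) (hα : 0 < α) (hαH : α ≤ 1 / H)
    (hc0 : 0 ≤ c) (hc1 : c < 1)
    (L₀ : EuclideanSpace ℝ (Fin m) → ℝ)
    (g : EuclideanSpace ℝ (Fin m) → EuclideanSpace ℝ (Fin m))
    (hgrad : ∀ x, HasGradientAt L₀ (g x) x)
    (hLip : ∀ x y, ‖g x - g y‖ ≤ H * ‖x - y‖)
    (hbdd : ∀ x, L₀star ≤ L₀ x)
    (θ d : ℕ → EuclideanSpace ℝ (Fin m))
    (hupd : ∀ t, θ (t + 1) = θ t - α • d t)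
    (hd : ∀ t, ‖d t - g (θ t)‖ ≤ c * ‖g (θ t)‖) (T : ℕ) :
    ∑ t ∈ Finset.range (T + 1), ‖g (θ t)‖ ^ 2 ≤
      2 * (L₀ (θ 0) - L₀star) / (α * (1 - c ^ 2)) :=
  stmt_4_general m H α c L₀star hα hαH hc0 hc1 L₀ g hgrad hLip hbdd θ d hupd hd T
end

section
/- Let g_1, ..., g_K ∈ R^m and W the probability simplex in R^K. The problem max_{‖d‖ ≤ 1} min_{i∈[K]} ⟨g_i, d⟩ has optimal value equal to min_{w ∈ W} ‖g_w‖ when the minimum-norm element g_{w*} of the convex hull of {g_i} is nonzero, and the maximizer is d* = g_{w*}/‖g_{w*}‖. -/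
/-! Weak duality: for `w` in the simplex and `‖d‖ ≤ 1`, the minimum of `⟪g i, d⟫` is at most
the average `⟪g_w, d⟫ ≤ ‖g_w‖`. Strong duality: `g_{w*}` is the projection of `0` onto the convex
hull of the `g i`, so the obtuse-angle criterion gives `⟪g i, g_{w*}⟫ ≥ ‖g_{w*}‖²` for every `i`,
and `d* = g_{w*} / ‖g_{w*}‖` attains the bound. -/

open scoped RealInnerProductSpace

section

variable {F : Type*} [NormedAddCommGroup F] [InnerProductSpace ℝ F]

theorem norm_sq_le_inner_of_isMinOn_norm {C : Set F} (hC : Convex ℝ C) {p q : F} (hp : p ∈ C)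
    (hmin : IsMinOn (‖·‖) C p) (hq : q ∈ C) : ‖p‖ ^ 2 ≤ ⟪p, q⟫ := by
  have : Nonempty C := ⟨⟨p, hp⟩⟩
  have hproj : ‖0 - p‖ = ⨅ c : C, ‖0 - (c : F)‖ := by
    simp only [zero_sub, norm_neg]
    exact le_antisymm (le_ciInf fun c => hmin c.2)
      (ciInf_le ⟨0, by rintro _ ⟨c, rfl⟩; exact norm_nonneg _⟩ (⟨p, hp⟩ : C))
  have hobtuse := (norm_eq_iInf_iff_real_inner_le_zero hC hp).1 hproj q hq
  rw [zero_sub, inner_neg_left, inner_sub_right, real_inner_self_eq_norm_sq] at hobtuse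
  linarith

variable {ι : Type*} [Fintype ι]

theorem iInf_le_sum_mul_of_mem_stdSimplex {w : ι → ℝ} (hw : w ∈ stdSimplex ℝ ι) (f : ι → ℝ) :
    ⨅ i, f i ≤ ∑ i, w i * f i :=
  calc ⨅ i, f i = ∑ i, w i * ⨅ j, f j := by rw [← Finset.sum_mul, hw.2, one_mul]
    _ ≤ ∑ i, w i * f i := Finset.sum_le_sum fun i _ =>
      mul_le_mul_of_nonneg_left (ciInf_le (Set.finite_range f).bddBelow i) (hw.1 i)

theorem iInf_inner_le_norm_sum_smul (g : ι → F) {w : ι → ℝ} (hw : w ∈ stdSimplex ℝ ι) {d : F}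
    (hd : ‖d‖ ≤ 1) : ⨅ i, ⟪g i, d⟫ ≤ ‖∑ i, w i • g i‖ :=
  calc ⨅ i, ⟪g i, d⟫ ≤ ∑ i, w i * ⟪g i, d⟫ := iInf_le_sum_mul_of_mem_stdSimplex hw _
    _ = ⟪∑ i, w i • g i, d⟫ := by simp only [sum_inner, real_inner_smul_left]
    _ ≤ ‖∑ i, w i • g i‖ * ‖d‖ := real_inner_le_norm _ _
    _ ≤ ‖∑ i, w i • g i‖ := mul_le_of_le_one_right (norm_nonneg _) hd

theorem norm_sq_le_inner_of_forall_mem_stdSimplex_norm_le (g : ι → F) {w : ι → ℝ}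
    (hw : w ∈ stdSimplex ℝ ι)
    (hmin : ∀ v ∈ stdSimplex ℝ ι, ‖∑ i, w i • g i‖ ≤ ‖∑ i, v i • g i‖) (i : ι) :
    ‖∑ j, w j • g j‖ ^ 2 ≤ ⟪∑ j, w j • g j, g i⟫ := by
  classical
  refine norm_sq_le_inner_of_isMinOn_norm
    ((convex_stdSimplex ℝ ι).linear_image (Fintype.linearCombination ℝ g))
    ⟨w, hw, Fintype.linearCombination_apply ℝ g w⟩ ?_
    ⟨Pi.single i 1, single_mem_stdSimplex ℝ i, by simp [Fintype.linearCombination_apply_single]⟩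
  rintro _ ⟨v, hv, rfl⟩
  simpa only [Set.mem_ofPred_eq, Fintype.linearCombination_apply] using hmin v hv

end

/-- MGDA primal-dual relation: the max-min value equals the minimum norm over the hull. -/
theorem stmt_8 (m K : ℕ) (hK : 0 < K)
    (g : Fin K → EuclideanSpace ℝ (Fin m))
    (w : Fin K → ℝ) (hw : w ∈ stdSimplex ℝ (Fin K))
    (hmin : ∀ v ∈ stdSimplex ℝ (Fin K), ‖∑ i, w i • g i‖ ≤ ‖∑ i, v i • g i‖)
    (hne : (∑ i, w i • g i) ≠ 0) :
    haveI : Nonempty (Fin K) := Fin.pos_iff_nonempty.mp hK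
    let gw := ∑ i, w i • g i
    let d := ‖gw‖⁻¹ • gw
    ‖d‖ ≤ 1 ∧ (⨅ i : Fin K, ⟪g i, d⟫) = ‖gw‖ ∧
      ∀ d' : EuclideanSpace ℝ (Fin m), ‖d'‖ ≤ 1 →
        (⨅ i : Fin K, ⟪g i, d'⟫) ≤ ‖gw‖ := by
  have : Nonempty (Fin K) := Fin.pos_iff_nonempty.mp hK
  intro gw d
  have hgw : 0 < ‖gw‖ := norm_pos_iff.mpr hne
  have hd : ‖d‖ = 1 := norm_smul_inv_norm hne
  have hupper : ∀ d' : EuclideanSpace ℝ (Fin m), ‖d'‖ ≤ 1 → ⨅ i, ⟪g i, d'⟫ ≤ ‖gw‖ :=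
    fun _ => iInf_inner_le_norm_sum_smul g hw
  refine ⟨hd.le, le_antisymm (hupper d hd.le) (le_ciInf fun i => ?_), hupper⟩
  calc ‖gw‖ = ‖gw‖⁻¹ * ‖gw‖ ^ 2 := by field_simp
    _ ≤ ‖gw‖⁻¹ * ⟪gw, g i⟫ := by
      gcongr
      exact norm_sq_le_inner_of_forall_mem_stdSimplex_norm_le g hw hmin i
    _ = ⟪g i, d⟫ := by rw [real_inner_smul_right, real_inner_comm]
end

section
/- Let K = 2 and g_1, g_2 ∈ R^m with g_1, g_2 ≠ 0 and ⟨g_1, g_2⟩ < 0 (conflicting gradients). Under the PCGrad update, the resulting vector d = (1/2)[(g_1 - (⟨g_1,g_2⟩/‖g_2‖²) g_2) + (g_2 - (⟨g_1,g_2⟩/‖g_1‖²) g_1)] satisfies ⟨d, g_i⟩ = (1/2)(1 - ⟨g_1,g_2⟩²/(‖g_1‖²‖g_2‖²)) ‖g_i‖² ≥ 0 for i = 1, 2; in particular ⟨d, g_1⟩ ≥ 0 and ⟨d, g_2⟩ ≥ 0. -/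
open scoped RealInnerProductSpace

/-- The two-task PCGrad update does not conflict with either task gradient. -/
theorem stmt_18 (m : ℕ) (g₁ g₂ : EuclideanSpace ℝ (Fin m))
    (h₁ : g₁ ≠ 0) (h₂ : g₂ ≠ 0) (hconf : ⟪g₁, g₂⟫ < 0) :
    let d := (1 / 2 : ℝ) •
      ((g₁ - (⟪g₁, g₂⟫ / ‖g₂‖ ^ 2) • g₂) + (g₂ - (⟪g₁, g₂⟫ / ‖g₁‖ ^ 2) • g₁))
    ⟪d, g₁⟫ = (1 / 2) * (1 - ⟪g₁, g₂⟫ ^ 2 / (‖g₁‖ ^ 2 * ‖g₂‖ ^ 2)) * ‖g₁‖ ^ 2 ∧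
    ⟪d, g₂⟫ = (1 / 2) * (1 - ⟪g₁, g₂⟫ ^ 2 / (‖g₁‖ ^ 2 * ‖g₂‖ ^ 2)) * ‖g₂‖ ^ 2 ∧
    0 ≤ ⟪d, g₁⟫ ∧ 0 ≤ ⟪d, g₂⟫ := by
  intro d
  have hn1 : ‖g₁‖ ≠ 0 := norm_ne_zero_iff.mpr h₁
  have hn2 : ‖g₂‖ ≠ 0 := norm_ne_zero_iff.mpr h₂
  have hcs : ⟪g₁, g₂⟫ ^ 2 ≤ ‖g₁‖ ^ 2 * ‖g₂‖ ^ 2 := by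
    have := abs_real_inner_le_norm g₁ g₂
    calc ⟪g₁, g₂⟫ ^ 2 = |⟪g₁, g₂⟫| ^ 2 := (sq_abs _).symm
      _ ≤ (‖g₁‖ * ‖g₂‖) ^ 2 := by
          apply pow_le_pow_left₀ (abs_nonneg _) this
      _ = ‖g₁‖ ^ 2 * ‖g₂‖ ^ 2 := by ring
  have hd1 : ⟪d, g₁⟫ = (1 / 2) * (1 - ⟪g₁, g₂⟫ ^ 2 / (‖g₁‖ ^ 2 * ‖g₂‖ ^ 2)) * ‖g₁‖ ^ 2 := by
    simp only [d, inner_smul_left, inner_add_left, inner_sub_left, real_inner_smul_left,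
      real_inner_self_eq_norm_sq, RCLike.conj_to_real]
    rw [real_inner_comm g₂ g₁]
    field_simp
    ring
  have hd2 : ⟪d, g₂⟫ = (1 / 2) * (1 - ⟪g₁, g₂⟫ ^ 2 / (‖g₁‖ ^ 2 * ‖g₂‖ ^ 2)) * ‖g₂‖ ^ 2 := by
    simp only [d, inner_smul_left, inner_add_left, inner_sub_left, real_inner_smul_left,
      real_inner_self_eq_norm_sq, RCLike.conj_to_real]
    rw [real_inner_comm g₂ g₁]
    field_simp
    ring
  have hfac : 0 ≤ 1 - ⟪g₁, g₂⟫ ^ 2 / (‖g₁‖ ^ 2 * ‖g₂‖ ^ 2) := by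
    have hpos : 0 < ‖g₁‖ ^ 2 * ‖g₂‖ ^ 2 := by positivity
    have := div_le_one_of_le₀ hcs hpos.le
    linarith
  refine ⟨hd1, hd2, ?_, ?_⟩
  · rw [hd1]; positivity
  · rw [hd2]; positivity
end

section
/- Let g_1, g_2 ∈ R^m be nonzero with ⟨g_1, g_2⟩ < 0, and d the PCGrad update from the previous statement. Then d = 0 if and only if g_1 and g_2 are anti-parallel, i.e., cos angle(g_1, g_2) = -1. -/
/-!
Write `c = ⟪x, y⟫`. Removing from `x` its component along `y` leaves a vector of squared norm
`‖x‖² - c² / ‖y‖²`, orthogonal to `y`; the same holds with `x` and `y` exchanged. Pairing the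
PCGrad update with `x` therefore gives `(‖x‖² - c² / ‖y‖²) / 2`, so the update vanishes exactly
when equality holds in Cauchy–Schwarz, `c² = (‖x‖ ‖y‖)²`; for conflicting gradients (`c < 0`)
this means `c / (‖x‖ ‖y‖) = -1`.
-/

open scoped RealInnerProductSpace

namespace PCGrad

variable {E : Type*} [NormedAddCommGroup E] [InnerProductSpace ℝ E]

noncomputable def update (x y : E) : E :=
  (1 / 2 : ℝ) • ((x - (⟪x, y⟫ / ‖y‖ ^ 2) • y) + (y - (⟪x, y⟫ / ‖x‖ ^ 2) • x))

theorem norm_sub_proj_sq (x : E) {y : E} (hy : y ≠ 0) :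
    ‖x - (⟪x, y⟫ / ‖y‖ ^ 2) • y‖ ^ 2 = ‖x‖ ^ 2 - ⟪x, y⟫ ^ 2 / ‖y‖ ^ 2 := by
  have : ‖y‖ ≠ 0 := norm_ne_zero_iff.mpr hy
  rw [norm_sub_sq_real, inner_smul_right, norm_smul, Real.norm_eq_abs, mul_pow, sq_abs]
  field_simp
  ring

theorem inner_update_left {x : E} (hx : x ≠ 0) (y : E) :
    ⟪x, update x y⟫ = (‖x‖ ^ 2 - ⟪x, y⟫ ^ 2 / ‖y‖ ^ 2) / 2 := by
  have : ‖x‖ ≠ 0 := norm_ne_zero_iff.mpr hx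
  simp only [update, inner_smul_right, inner_add_right, inner_sub_right,
    real_inner_self_eq_norm_sq, real_inner_comm y x]
  field_simp
  ring

theorem update_eq_zero_iff {x y : E} (hx : x ≠ 0) (hy : y ≠ 0) :
    update x y = 0 ↔ ⟪x, y⟫ ^ 2 = (‖x‖ * ‖y‖) ^ 2 := by
  have hy' : ‖y‖ ^ 2 ≠ 0 := by positivity
  constructor
  · intro h
    have hinner := inner_update_left hx y
    rw [h, inner_zero_right] at hinner
    field_simp at hinner
    linarith
  · intro h
    have hxy : x - (⟪x, y⟫ / ‖y‖ ^ 2) • y = 0 := by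
      rw [← norm_eq_zero, ← sq_eq_zero_iff, norm_sub_proj_sq x hy, h]
      field_simp
      ring
    have hyx : y - (⟪x, y⟫ / ‖x‖ ^ 2) • x = 0 := by
      rw [← norm_eq_zero, ← sq_eq_zero_iff, real_inner_comm, norm_sub_proj_sq y hx,
        real_inner_comm, h]
      field_simp
      ring
    rw [update, hxy, hyx, add_zero, smul_zero]

theorem update_eq_zero_iff_of_inner_neg {x y : E} (hxy : ⟪x, y⟫ < 0) :
    update x y = 0 ↔ ⟪x, y⟫ / (‖x‖ * ‖y‖) = -1 := by
  have hx : x ≠ 0 := by rintro rfl; simp at hxy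
  have hy : y ≠ 0 := by rintro rfl; simp at hxy
  have hpos : 0 < ‖x‖ * ‖y‖ := by positivity
  rw [update_eq_zero_iff hx hy, div_eq_iff hpos.ne', sq_eq_sq_iff_eq_or_eq_neg]
  constructor
  · rintro (h | h) <;> linarith
  · intro h
    right
    linarith

end PCGrad

theorem stmt_19_general (m : ℕ) (g₁ g₂ : EuclideanSpace ℝ (Fin m))
    (hconf : ⟪g₁, g₂⟫ < 0) :
    let d := (1 / 2 : ℝ) •
      ((g₁ - (⟪g₁, g₂⟫ / ‖g₂‖ ^ 2) • g₂) + (g₂ - (⟪g₁, g₂⟫ / ‖g₁‖ ^ 2) • g₁))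
    d = 0 ↔ ⟪g₁, g₂⟫ / (‖g₁‖ * ‖g₂‖) = -1 :=
  PCGrad.update_eq_zero_iff_of_inner_neg hconf

/-- The two-task PCGrad update vanishes iff the gradients are anti-parallel. -/
theorem stmt_19 (m : ℕ) (g₁ g₂ : EuclideanSpace ℝ (Fin m))
    (h₁ : g₁ ≠ 0) (h₂ : g₂ ≠ 0) (hconf : ⟪g₁, g₂⟫ < 0) :
    let d := (1 / 2 : ℝ) •
      ((g₁ - (⟪g₁, g₂⟫ / ‖g₂‖ ^ 2) • g₂) + (g₂ - (⟪g₁, g₂⟫ / ‖g₁‖ ^ 2) • g₁))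
    d = 0 ↔ ⟪g₁, g₂⟫ / (‖g₁‖ * ‖g₂‖) = -1 :=
  stmt_19_general m g₁ g₂ hconf
end
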